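/- Let $X$ be a Banach space, $A$ a densely defined closed operator on $X$, $p \in [1,\infty]$, $r \ge 1$. With the local DG relation as above on $J_n = (t_{n-1},t_n)$, one has $\|\partial_t u_\tau\|_{L^p(J_n;X)} \le C\,\|A u_\tau - f\|_{L^p(J_n;X)}$, where $C$ depends only on $r$ and $p$ (not on $\tau_n$, $n$, or $u_\tau$). -/

import Mathlib

/-!
Write `u'` in powers of `B t = (t - a) / (b - a)`, say `u' = ∑_{k<r} B^k • e_k`. Testing the DG
relation with `φ = B^(j+1) • x'`, which vanishes at `a` and so kills the jump term, gives
`∫ B^(j+1) x'(u') = -∫ B^(j+1) x'(A u - f)`: every moment of `x' ∘ u'` is bounded by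
`‖x'‖ ‖A u - f‖_{L¹}`. After rescaling to `[0, 1]` the moment map is the matrix `1 / (j + k + 2)`,
the Gram matrix of the monomials for the weight `s ds`, hence invertible with a constant depending
only on `r`. This bounds `u'` pointwise by that constant times the mean of `‖A u - f‖`, and
Hölder's inequality turns the pointwise bound into the `Lᵖ` bound.
-/

open MeasureTheory ENNReal

/-- A function is an `X`-valued polynomial of degree at most `r`. -/
def IsPolyDeg {X : Type*} [NormedAddCommGroup X] [NormedSpace ℝ X]
    (r : ℕ) (f : ℝ → X) : Prop :=
  ∃ c : Fin (r+1) → X, ∀ t : ℝ, f t = ∑ i : Fin (r+1), t ^ (i : ℕ) • c i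

open scoped Matrix

section Polynomials

variable {X Y : Type*} [NormedAddCommGroup X] [NormedSpace ℝ X]
  [NormedAddCommGroup Y] [NormedSpace ℝ Y]

theorem exists_sum_pow_comp_affine {n : ℕ} (α β : ℝ) (d : Fin n → X) :
    ∃ e : Fin n → X, ∀ s : ℝ,
      ∑ k : Fin n, (α * s + β) ^ (k : ℕ) • d k = ∑ m : Fin n, s ^ (m : ℕ) • e m := by
  refine ⟨fun m => ∑ k : Fin n, (α ^ (m : ℕ) * β ^ ((k : ℕ) - m) * (k : ℕ).choose m) • d k,
    fun s => ?_⟩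
  have hbinom : ∀ k : Fin n, (α * s + β) ^ (k : ℕ)
      = ∑ m : Fin n, s ^ (m : ℕ) * (α ^ (m : ℕ) * β ^ ((k : ℕ) - m) * (k : ℕ).choose m) := by
    intro k
    rw [add_pow, Fin.sum_univ_eq_sum_range (fun m => s ^ m * (α ^ m * β ^ ((k : ℕ) - m) *
      (k : ℕ).choose m)), ← Finset.sum_subset (Finset.range_subset_range.2 k.isLt)]
    · exact Finset.sum_congr rfl fun m _ => by ring
    · intro m _ hm
      simp [Nat.choose_eq_zero_of_lt (Finset.mem_range_succ_iff.not.1 hm |> not_le.1)]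
  simp only [hbinom, Finset.sum_smul, Finset.smul_sum, smul_smul]
  exact Finset.sum_comm

theorem IsPolyDeg.comp_affine {r : ℕ} {f : ℝ → X} (hf : IsPolyDeg r f) (α β : ℝ) :
    IsPolyDeg r (fun t => f (α * t + β)) := by
  obtain ⟨c, hc⟩ := hf
  obtain ⟨e, he⟩ := exists_sum_pow_comp_affine α β c
  exact ⟨e, fun t => (hc _).trans (he t)⟩

theorem isPolyDeg_pow {r n : ℕ} (hn : n ≤ r) : IsPolyDeg r (fun t : ℝ => t ^ n) :=
  ⟨Pi.single ⟨n, Nat.lt_succ_of_le hn⟩ 1, fun t => by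
    rw [Finset.sum_eq_single ⟨n, Nat.lt_succ_of_le hn⟩ (fun i _ hi => by simp [hi]) (by simp)]
    simp⟩

theorem IsPolyDeg.smul_const {r : ℕ} {ψ : ℝ → ℝ} (hψ : IsPolyDeg r ψ) (x : X) :
    IsPolyDeg r (fun t => ψ t • x) := by
  obtain ⟨c, hc⟩ := hψ
  exact ⟨fun i => c i • x, fun t => by simp [hc, Finset.sum_smul, smul_smul]⟩

theorem IsPolyDeg.map {r : ℕ} {f : ℝ → X} (hf : IsPolyDeg r f) (L : X →ₗ[ℝ] Y) :
    IsPolyDeg r (fun t => L (f t)) := by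
  obtain ⟨c, hc⟩ := hf
  exact ⟨fun i => L (c i), fun t => by simp [hc]⟩

theorem IsPolyDeg.continuous {r : ℕ} {f : ℝ → X} (hf : IsPolyDeg r f) : Continuous f := by
  obtain ⟨c, hc⟩ := hf
  rw [funext hc]
  fun_prop

theorem hasDerivAt_sum_pow_smul {r : ℕ} (c : Fin (r + 1) → X) (t : ℝ) :
    HasDerivAt (fun t => ∑ i : Fin (r + 1), t ^ (i : ℕ) • c i)
      (∑ k : Fin r, t ^ (k : ℕ) • (((k : ℝ) + 1) • c k.succ)) t := by
  convert HasDerivAt.fun_sum fun (i : Fin (r + 1)) _ =>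
    (hasDerivAt_pow (i : ℕ) t).smul_const (c i) using 1
  rw [Fin.sum_univ_succ]
  simp [smul_smul, mul_comm]

theorem IsPolyDeg.exists_hasDerivAt {r : ℕ} {u : ℝ → X} (hu : IsPolyDeg r u) (a : ℝ) {τ : ℝ}
    (hτ : τ ≠ 0) :
    ∃ e : Fin r → X, ∀ t, HasDerivAt u (∑ k : Fin r, ((t - a) / τ) ^ (k : ℕ) • e k) t := by
  obtain ⟨c, hc⟩ := hu
  obtain ⟨e, he⟩ := exists_sum_pow_comp_affine τ a fun k : Fin r => ((k : ℝ) + 1) • c k.succ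
  refine ⟨e, fun t => ?_⟩
  rw [funext hc, ← he, mul_div_cancel₀ _ hτ, sub_add_cancel]
  exact hasDerivAt_sum_pow_smul c t

end Polynomials

theorem eq_zero_of_sum_pow_eq_zero {r : ℕ} {v : Fin r → ℝ} {S : Set ℝ} (hS : S.Infinite)
    (h : ∀ s ∈ S, ∑ k, v k * s ^ (k : ℕ) = 0) : v = 0 := by
  set P : Polynomial ℝ := ∑ k, Polynomial.C (v k) * Polynomial.X ^ (k : ℕ)
  have hP : P = 0 := P.eq_zero_of_infinite_isRoot <| hS.mono fun s hs => by
    simpa [P, Polynomial.eval_finsetSum] using h s hs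
  funext k
  have hcoeff : P.coeff k = v k := by
    simp [P, Polynomial.coeff_C_mul, Polynomial.coeff_X_pow, Fin.val_inj]
  simpa [hP] using hcoeff.symm

noncomputable def momentMatrix (r : ℕ) : Matrix (Fin r) (Fin r) ℝ :=
  Matrix.of fun j k => ((j : ℝ) + k + 2)⁻¹

theorem integral_pow_succ_mul_sum_pow {r : ℕ} (c : Fin r → ℝ) (j : Fin r) :
    ∫ s in (0 : ℝ)..1, s ^ ((j : ℕ) + 1) * ∑ k, c k * s ^ (k : ℕ) = (momentMatrix r *ᵥ c) j := by
  simp only [Finset.mul_sum]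
  rw [intervalIntegral.integral_finsetSum fun k _ => by
    apply Continuous.intervalIntegrable; fun_prop]
  refine Finset.sum_congr rfl fun k _ => ?_
  have hpow : ∀ s : ℝ, s ^ ((j : ℕ) + 1) * (c k * s ^ (k : ℕ)) = c k * s ^ ((j : ℕ) + k + 1) :=
    fun s => by ring
  simp only [hpow, intervalIntegral.integral_const_mul, integral_pow, momentMatrix, Matrix.of_apply]
  push_cast
  ring

theorem momentMatrix_mulVec_eq_zero {r : ℕ} {v : Fin r → ℝ} (hv : momentMatrix r *ᵥ v = 0) :
    v = 0 := by
  set q : ℝ → ℝ := fun s => ∑ k, v k * s ^ (k : ℕ)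
  -- `v ⬝ᵥ (momentMatrix r *ᵥ v) = ∫₀¹ s q(s)² ds`
  have hquad : ∫ s in (0 : ℝ)..1, s * q s ^ 2 = 0 := by
    have hsplit : ∀ s : ℝ, s * q s ^ 2 = ∑ j, v j * (s ^ ((j : ℕ) + 1) * q s) := fun s => by
      simp only [q, sq, Finset.mul_sum, Finset.sum_mul]
      exact Finset.sum_congr rfl fun j _ => Finset.sum_congr rfl fun k _ => by ring
    simp only [hsplit]
    rw [intervalIntegral.integral_finsetSum fun j _ => by
      apply Continuous.intervalIntegrable; fun_prop]
    simp [intervalIntegral.integral_const_mul, q, integral_pow_succ_mul_sum_pow, hv]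
  have hae : (fun s => s * q s ^ 2) =ᵐ[volume.restrict (Set.Ioc 0 1)] 0 :=
    (intervalIntegral.integral_eq_zero_iff_of_le_of_nonneg_ae zero_le_one
      ((ae_restrict_iff' measurableSet_Ioc).2 <| .of_forall fun s hs => by
        have := hs.1.le; positivity)
      (by apply Continuous.intervalIntegrable; fun_prop)).1 hquad
  have hzero : Set.EqOn (fun s => s * q s ^ 2) 0 (Set.Ioc 0 1) :=
    Measure.eqOn_of_ae_eq hae (by fun_prop) continuousOn_const
      (by simpa using Set.Ioc_subset_Icc_self)
  refine eq_zero_of_sum_pow_eq_zero (Set.Ioo_infinite zero_lt_one) fun s hs => ?_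
  have := hzero (Set.Ioo_subset_Ioc_self hs)
  simp only [Pi.zero_apply, mul_eq_zero, pow_eq_zero_iff two_ne_zero] at this
  exact this.resolve_left hs.1.ne'

theorem isUnit_momentMatrix (r : ℕ) : IsUnit (momentMatrix r) := by
  refine Matrix.mulVec_injective_iff_isUnit.1 fun v w h => ?_
  rw [← sub_eq_zero]
  exact momentMatrix_mulVec_eq_zero (by rw [Matrix.mulVec_sub, h, sub_self])

noncomputable def momentConst (r : ℕ) : ℝ :=
  ∑ k, ∑ j, |(momentMatrix r)⁻¹ k j|

theorem momentConst_nonneg (r : ℕ) : 0 ≤ momentConst r :=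
  Finset.sum_nonneg fun _ _ => Finset.sum_nonneg fun _ _ => abs_nonneg _

theorem abs_sum_pow_le_of_moments {r : ℕ} (c : Fin r → ℝ) {M : ℝ}
    (hM : ∀ j : Fin r, |∫ s in (0 : ℝ)..1, s ^ ((j : ℕ) + 1) * ∑ k, c k * s ^ (k : ℕ)| ≤ M)
    {s : ℝ} (hs : s ∈ Set.Icc (0 : ℝ) 1) :
    |∑ k, c k * s ^ (k : ℕ)| ≤ momentConst r * M := by
  have hc : c = (momentMatrix r)⁻¹ *ᵥ (momentMatrix r *ᵥ c) := by
    rw [Matrix.mulVec_mulVec, Matrix.nonsing_inv_mul _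
      ((Matrix.isUnit_iff_isUnit_det _).1 (isUnit_momentMatrix r)), Matrix.one_mulVec]
  have hck : ∀ k, |c k| ≤ (∑ j, |(momentMatrix r)⁻¹ k j|) * M := fun k => by
    rw [hc, Matrix.mulVec, dotProduct, Finset.sum_mul]
    refine (Finset.abs_sum_le_sum_abs _ _).trans (Finset.sum_le_sum fun j _ => ?_)
    rw [abs_mul, ← integral_pow_succ_mul_sum_pow]
    exact mul_le_mul_of_nonneg_left (hM j) (abs_nonneg _)
  calc |∑ k, c k * s ^ (k : ℕ)| ≤ ∑ k, |c k| := by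
        refine (Finset.abs_sum_le_sum_abs _ _).trans (Finset.sum_le_sum fun k _ => ?_)
        rw [abs_mul, abs_pow, abs_of_nonneg hs.1]
        exact mul_le_of_le_one_right (abs_nonneg _) (pow_le_one₀ hs.1 hs.2)
    _ ≤ momentConst r * M := by
        rw [momentConst, Finset.sum_mul]
        exact Finset.sum_le_sum fun k _ => hck k

theorem integral_comp_unitInterval (h : ℝ → ℝ) {a b : ℝ} (hab : a ≠ b) :
    ∫ t in a..b, h ((t - a) / (b - a)) = (b - a) * ∫ s in (0 : ℝ)..1, h s := by
  have hba : b - a ≠ 0 := sub_ne_zero.2 hab.symm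
  simp only [sub_div]
  rw [intervalIntegral.integral_comp_div_sub h hba, sub_self, ← sub_div, div_self hba, smul_eq_mul]

section LocalDG

variable {X : Type*} [NormedAddCommGroup X] [NormedSpace ℝ X]

theorem norm_sum_pow_smul_le_of_dual_moments {r : ℕ} {a b : ℝ} (hab : a < b) (e : Fin r → X)
    {M : ℝ} (hM0 : 0 ≤ M)
    (hM : ∀ (x' : StrongDual ℝ X) (j : Fin r),
      |∫ t in a..b, ((t - a) / (b - a)) ^ ((j : ℕ) + 1) *
        x' (∑ k : Fin r, ((t - a) / (b - a)) ^ (k : ℕ) • e k)| ≤ ‖x'‖ * M)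
    {t : ℝ} (ht : t ∈ Set.Icc a b) :
    ‖∑ k : Fin r, ((t - a) / (b - a)) ^ (k : ℕ) • e k‖ ≤ momentConst r * M / (b - a) := by
  have hba : 0 < b - a := sub_pos.2 hab
  have hconst := momentConst_nonneg r
  refine NormedSpace.norm_le_dual_bound ℝ _ (by positivity) fun x' => ?_
  have hx' : ∀ s : ℝ, x' (∑ k : Fin r, s ^ (k : ℕ) • e k) = ∑ k : Fin r, x' (e k) * s ^ (k : ℕ) :=
    fun s => by simp [mul_comm]
  have hs : (t - a) / (b - a) ∈ Set.Icc (0 : ℝ) 1 :=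
    ⟨div_nonneg (by linarith [ht.1]) hba.le, (div_le_one hba).2 (by linarith [ht.2])⟩
  rw [Real.norm_eq_abs, hx']
  calc |∑ k : Fin r, x' (e k) * ((t - a) / (b - a)) ^ (k : ℕ)|
      ≤ momentConst r * (‖x'‖ * M / (b - a)) := by
        refine abs_sum_pow_le_of_moments _ (fun j => ?_) hs
        rw [le_div_iff₀ hba, ← abs_of_pos hba, ← abs_mul, mul_comm,
          ← integral_comp_unitInterval
            (fun s => s ^ ((j : ℕ) + 1) * ∑ k : Fin r, x' (e k) * s ^ (k : ℕ)) hab.ne]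
        simpa only [hx'] using hM x' j
    _ = momentConst r * M / (b - a) * ‖x'‖ := by ring

/-- The local DG relation on `(a, b)`: `um` is the trace from the previous interval, so `u a - um`
is the jump at `a`. -/
def IsLocalDGSolution (r : ℕ) (A : X →ₗ[ℝ] X) (a b : ℝ) (u : ℝ → X) (um : X) (f : ℝ → X) : Prop :=
  ∀ φ : ℝ → StrongDual ℝ X, IsPolyDeg r φ →
    (∫ t in a..b, φ t (deriv u t + A (u t))) + φ a (u a - um) = ∫ t in a..b, φ t (f t)

variable {r : ℕ} {A : X →ₗ[ℝ] X} {a b : ℝ} {u : ℝ → X} {um : X} {f : ℝ → X}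

theorem IsLocalDGSolution.abs_integral_le
    (hsol : IsLocalDGSolution r A a b u um f) (hab : a ≤ b) (hu : IsPolyDeg r u)
    (hu' : Continuous (deriv u)) (hf : IntervalIntegrable f volume a b)
    {ψ : ℝ → ℝ} (hψ : IsPolyDeg r ψ) (hψa : ψ a = 0) (hψ1 : ∀ t ∈ Set.Ioc a b, |ψ t| ≤ 1)
    (x' : StrongDual ℝ X) :
    |∫ t in a..b, ψ t * x' (deriv u t)| ≤ ‖x'‖ * ∫ t in a..b, ‖A (u t) - f t‖ := by
  have hψc : Continuous ψ := hψ.continuous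
  have hAu : Continuous fun t => A (u t) := (hu.map A).continuous
  have hDu : IntervalIntegrable (fun t => ψ t * x' (deriv u t)) volume a b :=
    (hψc.mul (x'.continuous.comp hu')).intervalIntegrable a b
  have hAu' : IntervalIntegrable (fun t => ψ t * x' (A (u t))) volume a b :=
    (hψc.mul (x'.continuous.comp hAu)).intervalIntegrable a b
  have hf' : IntervalIntegrable (fun t => ψ t * x' (f t)) volume a b :=
    IntervalIntegrable.continuousOn_mul ⟨x'.integrable_comp hf.1, x'.integrable_comp hf.2⟩
      hψc.continuousOn
  have horth : ∫ t in a..b, ψ t * x' (deriv u t) = -∫ t in a..b, ψ t * x' (A (u t) - f t) := by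
    have h := hsol _ (hψ.smul_const x')
    simp only [hψa, zero_smul, zero_apply, smul_apply, smul_eq_mul, map_add, map_sub,
      mul_sub] at h ⊢
    rw [intervalIntegral.integral_add hDu hAu'] at h
    rw [intervalIntegral.integral_sub hAu' hf']
    linarith
  have hg : IntervalIntegrable (fun t => ‖x'‖ * ‖A (u t) - f t‖) volume a b :=
    ((hAu.intervalIntegrable a b).sub hf).norm.const_mul ‖x'‖
  rw [horth, abs_neg, ← intervalIntegral.integral_const_mul, ← Real.norm_eq_abs]
  refine intervalIntegral.norm_integral_le_of_norm_le hab (.of_forall fun t ht => ?_) hg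
  rw [norm_mul, ← one_mul (‖x'‖ * _)]
  exact mul_le_mul (hψ1 t ht) (x'.le_opNorm _) (norm_nonneg _) zero_le_one

theorem IsLocalDGSolution.abs_integral_pow_le
    (hsol : IsLocalDGSolution r A a b u um f) (hab : a < b) (hu : IsPolyDeg r u)
    (hu' : Continuous (deriv u)) (hf : IntervalIntegrable f volume a b)
    (x' : StrongDual ℝ X) {n : ℕ} (hn : n ≠ 0) (hnr : n ≤ r) :
    |∫ t in a..b, ((t - a) / (b - a)) ^ n * x' (deriv u t)|
      ≤ ‖x'‖ * ∫ t in a..b, ‖A (u t) - f t‖ := by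
  have hba : 0 < b - a := sub_pos.2 hab
  refine hsol.abs_integral_le hab.le hu hu' hf ?_ (by simp [zero_pow hn]) (fun t ht => ?_) x'
  · convert (isPolyDeg_pow hnr).comp_affine (b - a)⁻¹ (-(a / (b - a))) using 2
    ring
  · rw [abs_pow, abs_div, abs_of_pos (sub_pos.2 ht.1), abs_of_pos hba]
    exact pow_le_one₀ (div_nonneg (sub_pos.2 ht.1).le hba.le)
      ((div_le_one hba).2 (by linarith [ht.2]))

end LocalDG

theorem eLpNorm_le_of_norm_le_average {α E F : Type*} [MeasurableSpace α] {μ : Measure α}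
    [IsFiniteMeasure μ] [NormedAddCommGroup E] [NormedAddCommGroup F] {p : ℝ≥0∞} (hp : 1 ≤ p)
    {D : α → E} {g : α → F} (hg : Integrable g μ) {K : ℝ} (hK : 0 ≤ K)
    (hD : ∀ᵐ x ∂μ, ‖D x‖ ≤ K * ⨍ x, ‖g x‖ ∂μ) :
    eLpNorm D p μ ≤ ENNReal.ofReal K * eLpNorm g p μ := by
  rcases eq_zero_or_neZero μ with rfl | hμ
  · simp
  set T := μ Set.univ
  have hT0 : T ≠ 0 := (Measure.measure_univ_pos.2 (NeZero.ne μ)).ne'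
  have hTtop : T ≠ ∞ := measure_ne_top μ _
  have havg : ENNReal.ofReal (⨍ x, ‖g x‖ ∂μ) = T⁻¹ * eLpNorm g 1 μ := by
    simp only [ofReal_average hg.norm (.of_forall fun _ => norm_nonneg _), ofReal_norm,
      eLpNorm_one_eq_lintegral_enorm, ENNReal.div_eq_inv_mul, T]
  have hexp : p.toReal⁻¹ + -1 + (1 / (1 : ℝ≥0∞).toReal - 1 / p.toReal) = 0 := by
    simp only [ENNReal.toReal_one, one_div]
    ring
  calc eLpNorm D p μ ≤ T ^ p.toReal⁻¹ * ENNReal.ofReal (K * ⨍ x, ‖g x‖ ∂μ) :=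
        eLpNorm_le_of_ae_bound hD
    _ = T ^ p.toReal⁻¹ * (ENNReal.ofReal K * (T⁻¹ * eLpNorm g 1 μ)) := by
        rw [ENNReal.ofReal_mul hK, havg]
    _ ≤ T ^ p.toReal⁻¹ * (ENNReal.ofReal K *
          (T⁻¹ * (eLpNorm g p μ * T ^ (1 / (1 : ℝ≥0∞).toReal - 1 / p.toReal)))) := by
        gcongr
        exact eLpNorm_le_eLpNorm_mul_rpow_measure_univ hp hg.aestronglyMeasurable
    _ = (T ^ p.toReal⁻¹ * T ^ (-1 : ℝ) * T ^ (1 / (1 : ℝ≥0∞).toReal - 1 / p.toReal))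
          * (ENNReal.ofReal K * eLpNorm g p μ) := by
        rw [ENNReal.rpow_neg_one]
        ring
    _ = ENNReal.ofReal K * eLpNorm g p μ := by
        rw [← ENNReal.rpow_add _ _ hT0 hTtop, ← ENNReal.rpow_add _ _ hT0 hTtop, hexp,
          ENNReal.rpow_zero, one_mul]

theorem stmt_13_general (r : ℕ) (p : ℝ≥0∞) (hp : 1 ≤ p) :
    ∃ C : ℝ, 0 < C ∧
      ∀ (X : Type) (_ : NormedAddCommGroup X) (_ : NormedSpace ℝ X) (_ : CompleteSpace X)
        (A : X →ₗ[ℝ] X) (a b : ℝ), a < b →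
      ∀ (u : ℝ → X), IsPolyDeg r u →
      ∀ (um : X) (f : ℝ → X), MemLp f p (volume.restrict (Set.Ioo a b)) →
      (∀ φ : ℝ → StrongDual ℝ X, IsPolyDeg r φ →
        (∫ t in a..b, φ t (deriv u t + A (u t))) + φ a (u a - um)
          = ∫ t in a..b, φ t (f t)) →
      eLpNorm (fun t => deriv u t) p (volume.restrict (Set.Ioo a b))
        ≤ ENNReal.ofReal C *
            eLpNorm (fun t => A (u t) - f t) p (volume.restrict (Set.Ioo a b)) := by
  have hK := momentConst_nonneg r
  refine ⟨momentConst r + 1, by linarith, fun X _ _ _ A a b hab u hu um f hf hsol => ?_⟩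
  have hba : 0 < b - a := sub_pos.2 hab
  have hfi : IntervalIntegrable f volume a b :=
    (intervalIntegrable_iff_integrableOn_Ioo_of_le hab.le).2 (hf.integrable hp)
  have hgi : IntegrableOn (fun t => A (u t) - f t) (Set.Ioo a b) :=
    (((hu.map A).continuous.intervalIntegrable a b).sub hfi).1.mono_set Set.Ioo_subset_Ioc_self
  obtain ⟨e, he⟩ := hu.exists_hasDerivAt a hba.ne'
  have hderiv : deriv u = fun t => ∑ k : Fin r, ((t - a) / (b - a)) ^ (k : ℕ) • e k :=
    funext fun t => (he t).deriv
  have hbound : ∀ t ∈ Set.Icc a b, ‖deriv u t‖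
      ≤ momentConst r * ⨍ t in Set.Ioo a b, ‖A (u t) - f t‖ := by
    intro t ht
    rw [setAverage_eq, Real.volume_real_Ioo_of_le hab.le, ← integral_Ioc_eq_integral_Ioo,
      ← intervalIntegral.integral_of_le hab.le, smul_eq_mul, ← div_eq_inv_mul, ← mul_div_assoc,
      hderiv]
    refine norm_sum_pow_smul_le_of_dual_moments hab e
      (intervalIntegral.integral_nonneg hab.le fun _ _ => norm_nonneg _) (fun x' j => ?_) ht
    simpa only [hderiv] using IsLocalDGSolution.abs_integral_pow_le hsol hab hu
      (by rw [hderiv]; fun_prop) hfi x' (Nat.succ_ne_zero _) j.isLt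
  refine (eLpNorm_le_of_norm_le_average hp hgi hK ?_).trans (by gcongr; linarith)
  filter_upwards [ae_restrict_mem measurableSet_Ioo] with t ht
  exact hbound t (Set.Ioo_subset_Icc_self ht)

theorem stmt_13 (r : ℕ) (hr : 1 ≤ r) (p : ℝ≥0∞) (hp : 1 ≤ p) :
    ∃ C : ℝ, 0 < C ∧
      ∀ (X : Type) (_ : NormedAddCommGroup X) (_ : NormedSpace ℝ X) (_ : CompleteSpace X)
        (A : X →ₗ[ℝ] X) (a b : ℝ), a < b →
      ∀ (u : ℝ → X), IsPolyDeg r u →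
      ∀ (um : X) (f : ℝ → X), MemLp f p (volume.restrict (Set.Ioo a b)) →
      (∀ φ : ℝ → StrongDual ℝ X, IsPolyDeg r φ →
        (∫ t in a..b, φ t (deriv u t + A (u t))) + φ a (u a - um)
          = ∫ t in a..b, φ t (f t)) →
      eLpNorm (fun t => deriv u t) p (volume.restrict (Set.Ioo a b))
        ≤ ENNReal.ofReal C *
            eLpNorm (fun t => A (u t) - f t) p (volume.restrict (Set.Ioo a b)) :=
  stmt_13_general r p hp
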